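/- arXiv:2012.13663 — 2 statements merged into one kernel-verified Lean document; each statement's English description precedes it below -/
import Mathlib

section
/- Fix a > 0 and η > 0. The function φ(κ) = (κ/a + η) log(1 + aη/κ) − η is convex in κ on (0, ∞). -/
/-!
With `c = a η` the function is `κ ↦ a⁻¹ (κ + c) log (1 + c / κ) - η`. The derivative of
`κ ↦ (κ + c) log (1 + c / κ)` is `ψ (c / κ)` with `ψ t = log (1 + t) - t`, which is antitone on
`[0, ∞)` because `log (1 + t) - log (1 + s) ≤ (t - s) / (1 + s)`. Since `c / κ` decreases in `κ`,
the derivative is monotone, hence the function is convex.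
-/

open Real Set

lemma antitoneOn_log_one_add_sub_self : AntitoneOn (fun t : ℝ => log (1 + t) - t) (Ici 0) := by
  intro s hs t _ hst
  have hs₁ : 0 < 1 + s := by linarith [mem_Ici.mp hs]
  have hlog : log (1 + t) - log (1 + s) ≤ t - s := calc
    log (1 + t) - log (1 + s) = log ((1 + t) / (1 + s)) := (log_div (by linarith) hs₁.ne').symm
    _ ≤ (1 + t) / (1 + s) - 1 := log_le_sub_one_of_pos (by apply div_pos <;> linarith)
    _ = (t - s) / (1 + s) := by field_simp; ring
    _ ≤ t - s := div_le_self (by linarith) (by linarith [mem_Ici.mp hs])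
  dsimp only
  linarith

lemma hasDerivAt_add_mul_log_one_add_div {c x : ℝ} (hx : x ≠ 0) (hxc : x + c ≠ 0) :
    HasDerivAt (fun y => (y + c) * log (1 + c / y)) (log (1 + c / x) - c / x) x := by
  have hinner : 1 + c / x ≠ 0 := by rwa [one_add_div hx, div_ne_zero_iff, and_iff_left hx]
  have hlog : HasDerivAt (fun y => log (1 + c / y)) (c * -(x ^ 2)⁻¹ / (1 + c / x)) x := by
    have := ((hasDerivAt_inv hx).const_mul c).const_add 1
    simp only [← div_eq_mul_inv] at this
    exact this.log hinner
  refine (((hasDerivAt_id x).add_const c).mul hlog).congr_deriv ?_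
  rw [id]
  field_simp
  ring

lemma convexOn_add_mul_log_one_add_div {c : ℝ} (hc : 0 ≤ c) :
    ConvexOn ℝ (Ioi 0) (fun x => (x + c) * log (1 + c / x)) := by
  have hderiv : ∀ x ∈ Ioi (0 : ℝ), HasDerivAt (fun y => (y + c) * log (1 + c / y))
      (log (1 + c / x) - c / x) x := fun x hx =>
    hasDerivAt_add_mul_log_one_add_div (ne_of_gt hx) (by linarith [mem_Ioi.mp hx])
  have hdiff : DifferentiableOn ℝ (fun y => (y + c) * log (1 + c / y)) (Ioi 0) :=
    fun x hx => (hderiv x hx).differentiableAt.differentiableWithinAt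
  refine MonotoneOn.convexOn_of_deriv (convex_Ioi 0) hdiff.continuousOn
    (by rwa [interior_Ioi]) ?_
  rw [interior_Ioi]
  intro x hx y hy hxy
  rw [(hderiv x hx).deriv, (hderiv y hy).deriv]
  exact antitoneOn_log_one_add_sub_self (div_nonneg hc hy.le) (div_nonneg hc hx.le)
    (div_le_div_of_nonneg_left hc hx hxy)

theorem log_age_convex (a η : ℝ) (ha : 0 < a) (hη : 0 < η) :
    ConvexOn ℝ (Set.Ioi (0:ℝ))
      (fun κ : ℝ => (κ / a + η) * Real.log (1 + a * η / κ) - η) := by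
  refine (((convexOn_add_mul_log_one_add_div (mul_pos ha hη).le).smul
    (inv_nonneg.mpr ha.le)).add_const (-η)).congr fun κ _ => ?_
  simp only [Pi.add_apply, smul_eq_mul]
  field_simp
  ring
end

section
/- Let C ≥ 1, η_c > 0 with ∑_c η_c = 1, p_c > 0, and ε ∈ (0, min_c η_c). Define H_c = (η_c − ε)/√((η_c² + ε²) p_c) · ∑_j √((η_j² + ε²)/p_j). Then ∑_{c=1}^C η_c/(H_c p_c) > 1. -/
open Finset Real

/-!
Write `a_c = √((η_c² + ε²) / p_c)` and `S = ∑_j a_j`. Then `η_c / (H_c p_c) = η_c / (η_c - ε) · a_c / S`: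
each term is the normalised weight `a_c / S` inflated by the factor `η_c / (η_c - ε) > 1`,
and the weights `a_c / S` sum to `1`.
-/

theorem Real.sqrt_mul_div_self_eq_sqrt_div (x : ℝ) {p : ℝ} (hp : 0 ≤ p) :
    √(x * p) / p = √(x / p) := by
  rw [sqrt_div' x hp, sqrt_mul' x hp, mul_div_assoc, sqrt_div_self', mul_one_div]

theorem one_lt_sum_mul_div_sum {ι : Type*} {s : Finset ι} (hs : s.Nonempty) {a r : ι → ℝ}
    (ha : ∀ i ∈ s, 0 < a i) (hr : ∀ i ∈ s, 1 < r i) :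
    1 < ∑ i ∈ s, r i * (a i / ∑ j ∈ s, a j) := by
  have hS : 0 < ∑ j ∈ s, a j := sum_pos ha hs
  calc (1 : ℝ) = ∑ i ∈ s, a i / ∑ j ∈ s, a j := by rw [← sum_div, div_self hS.ne']
    _ < ∑ i ∈ s, r i * (a i / ∑ j ∈ s, a j) :=
      sum_lt_sum_of_nonempty hs fun i hi =>
        lt_mul_of_one_lt_left (div_pos (ha i hi) hS) (hr i hi)

theorem near_optimal_thresholds_stability_general (C : ℕ) (hC : 1 ≤ C)
    (η p : Fin C → ℝ) (hp : ∀ c, 0 < p c)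
    (ε : ℝ) (hε : 0 < ε) (hεη : ∀ c, ε < η c)
    (H : Fin C → ℝ)
    (hH : ∀ c, H c = (η c - ε) / Real.sqrt ((η c ^ 2 + ε ^ 2) * p c) *
        (∑ j, Real.sqrt ((η j ^ 2 + ε ^ 2) / p j))) :
    (∑ c, η c / (H c * p c)) > 1 := by
  have : NeZero C := ⟨by omega⟩
  have hterm : ∀ c, η c / (H c * p c) = η c / (η c - ε) *
      (√((η c ^ 2 + ε ^ 2) / p c) / ∑ j, √((η j ^ 2 + ε ^ 2) / p j)) := by
    intro c
    rw [hH c, ← sqrt_mul_div_self_eq_sqrt_div _ (hp c).le]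
    simp only [div_eq_mul_inv, mul_inv, inv_inv]
    ring
  simp only [hterm]
  exact one_lt_sum_mul_div_sum univ_nonempty
    (fun c _ => sqrt_pos.2 (div_pos (by positivity) (hp c)))
    (fun c _ => (one_lt_div (sub_pos.2 (hεη c))).2 (sub_lt_self _ hε))

theorem near_optimal_thresholds_stability (C : ℕ) (hC : 1 ≤ C)
    (η p : Fin C → ℝ) (hη : ∀ c, 0 < η c) (hp : ∀ c, 0 < p c)
    (hsum : ∑ c, η c = 1)
    (ε : ℝ) (hε : 0 < ε) (hεη : ∀ c, ε < η c)
    (H : Fin C → ℝ)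
    (hH : ∀ c, H c = (η c - ε) / Real.sqrt ((η c ^ 2 + ε ^ 2) * p c) *
        (∑ j, Real.sqrt ((η j ^ 2 + ε ^ 2) / p j))) :
    (∑ c, η c / (H c * p c)) > 1 :=
  near_optimal_thresholds_stability_general C hC η p hp ε hε hεη H hH
end
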